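/- arXiv:1603.03002 — 2 statements merged into one kernel-verified Lean document; each statement's English description precedes it below -/
import Mathlib

section
/- Let F be the free group of rank m ≥ 2 and let a ∈ Σ. Then for all real t ∈ (−1,1): g_{C(a,a)}(t) = t²/(4m²(1−t)) + t²/(4m²(2m−1+t)) + t³/(2m((2m−1)²−t²)). -/
open Filter Set

noncomputable section

/-- The free group of rank `m`. -/
abbrev FG (m : ℕ) := FreeGroup (Fin m)

/-- The length of the reduced word of `g`. -/
def glen {m : ℕ} (g : FG m) : ℕ := (FreeGroup.toWord g).length

/-- The cardinality of the sphere of radius `k` in the free group of rank `m`,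
as a real number: `1` if `k = 0` and `2m(2m-1)^(k-1)` otherwise. -/
def sphereCard (m k : ℕ) : ℝ :=
  if k = 0 then 1 else 2 * (m : ℝ) * (2 * (m : ℝ) - 1) ^ (k - 1)

/-- `n_k(R)`: the number of elements of length `k` in `R`. -/
def nk {m : ℕ} (R : Set (FG m)) (k : ℕ) : ℕ := {g ∈ R | glen g = k}.ncard

/-- `f_k(R) = n_k(R) / |S_k|`: the frequency of elements of `R` among words of length `k`. -/
def fk {m : ℕ} (R : Set (FG m)) (k : ℕ) : ℝ := (nk R k : ℝ) / sphereCard m k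

/-- The frequency generating function `g_R(t) = ∑ f_k(R) t^k`. -/
def genFun {m : ℕ} (R : Set (FG m)) (t : ℝ) : ℝ := ∑' k : ℕ, fk R k * t ^ k

/-- The adjusted generating function `g*_R(t) = ∑ n_k(R) (t/(2m-1))^k`. -/
def genFunStar {m : ℕ} (R : Set (FG m)) (t : ℝ) : ℝ :=
  ∑' k : ℕ, (nk R k : ℝ) * (t / (2 * (m : ℝ) - 1)) ^ k

/-- `R` is thick: `lim_{t→1⁻} (1-t)·g_R(t)` exists and is positive. -/
def IsThick {m : ℕ} (R : Set (FG m)) : Prop :=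
  ∃ c : ℝ, 0 < c ∧
    Tendsto (fun t => (1 - t) * genFun R t) (nhdsWithin 1 (Set.Iio 1)) (nhds c)

/-- `R` is exponentially negligible (exponentially λ-measurable): there is `δ ∈ (0,1)`
with `f_k(R) < δ^k` for all sufficiently large `k`. -/
def ExpNegligible {m : ℕ} (R : Set (FG m)) : Prop :=
  ∃ δ : ℝ, 0 < δ ∧ δ < 1 ∧ ∀ᶠ k : ℕ in atTop, fk R k < δ ^ k

/-- `R ⊆ F` is a regular set if the language of reduced words of its elements
(over the alphabet `Σ = X ∪ X⁻¹`, encoded as `Fin m × Bool`) is a regular language. -/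
def IsRegularSet {m : ℕ} (R : Set (FG m)) : Prop :=
  Language.IsRegular {w : List (Fin m × Bool) | ∃ g ∈ R, FreeGroup.toWord g = w}

/-- The cone `C(w) = { wf : |wf| = |w| + |f| }`. -/
def cone {m : ℕ} (w : FG m) : Set (FG m) :=
  {g | ∃ f, g = w * f ∧ glen g = glen w + glen f}

/-- The right cone `C[w] = { fw : |fw| = |f| + |w| }`. -/
def coneR {m : ℕ} (w : FG m) : Set (FG m) :=
  {g | ∃ f, g = f * w ∧ glen g = glen f + glen w}

/-- The double-based cone `C(u,v) = { ufv : |ufv| = |u| + |f| + |v| }`. -/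
def dcone {m : ℕ} (u v : FG m) : Set (FG m) :=
  {g | ∃ f, g = u * f * v ∧ glen g = glen u + glen f + glen v}

/-- The prefix closure of `R`. -/
def prefixClosure {m : ℕ} (R : Set (FG m)) : Set (FG m) :=
  {p | ∃ g ∈ R, ∃ s, g = p * s ∧ glen g = glen p + glen s}

/-- A finite deterministic partial automaton over the alphabet
`Σ = X ∪ X⁻¹` (encoded as `Fin m × Bool`), with one initial and one final state. -/
structure PAut (m : ℕ) where
  n : ℕ
  step : Fin n → Fin m × Bool → Option (Fin n)
  start : Fin n
  accept : Fin n

namespace PAut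

variable {m : ℕ}

/-- Run the automaton from state `s` on the word `w`. -/
def evalFrom (A : PAut m) : Fin A.n → List (Fin m × Bool) → Option (Fin A.n)
  | s, [] => some s
  | s, a :: w =>
    match A.step s a with
    | none => none
    | some s' => A.evalFrom s' w

/-- The set of words accepted by `A`. -/
def words (A : PAut m) : Set (List (Fin m × Bool)) :=
  {w | A.evalFrom A.start w = some A.accept}

/-- The language of `A`, identified with a subset of the free group. -/
def lang (A : PAut m) : Set (FG m) :=
  (fun w => FreeGroup.mk w) '' A.words

/-- Conditions (c)–(f) of a special automaton:
(c) every state is reachable from the initial state;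
(d) the final state is reachable from every state;
(e) all transitions entering a given state carry the same label (the type of the state);
(f) if a state has type `x`, no transition labeled `x⁻¹` leaves it. -/
def CoreSpecial (A : PAut m) : Prop :=
  (∀ s, ∃ w, A.evalFrom A.start w = some s) ∧
  (∀ s, ∃ w, A.evalFrom s w = some A.accept) ∧
  (∀ s₁ a₁ s₂ a₂ s, A.step s₁ a₁ = some s → A.step s₂ a₂ = some s → a₁ = a₂) ∧
  (∀ s' a s, A.step s' a = some s → A.step s (a.1, !a.2) = none)

/-- A special automaton over the free group: conditions (a)–(f), with distinct
initial and final states and no transition entering the initial state. -/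
def IsSpecial (A : PAut m) : Prop :=
  A.start ≠ A.accept ∧ (∀ s a, A.step s a ≠ some A.start) ∧ A.CoreSpecial

/-- A special monoid automaton: conditions (c)–(f), with the initial state equal to
the final state. -/
def IsSpecialMonoidAut (A : PAut m) : Prop :=
  A.start = A.accept ∧ A.CoreSpecial

/-- `A` is `Σ`-complete: every state `s` has a type `x` and for every label
`y ≠ x⁻¹` the transition `δ(s,y)` is defined. -/
def SigmaComplete (A : PAut m) : Prop :=
  ∀ s, ∃ a, (∃ s', A.step s' a = some s) ∧
    ∀ b, b ≠ (a.1, !a.2) → (A.step s b).isSome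

end PAut

/-- A special monoid: the language of a special monoid automaton. -/
def IsSpecialMonoid {m : ℕ} (M : Set (FG m)) : Prop :=
  ∃ A : PAut m, A.IsSpecialMonoidAut ∧ M = A.lang

/-- A thick monoid: the language of a `Σ`-complete special monoid automaton. -/
def IsThickMonoid {m : ℕ} (M : Set (FG m)) : Prop :=
  ∃ A : PAut m, A.IsSpecialMonoidAut ∧ A.SigmaComplete ∧ M = A.lang

/-!
An element of `C(a,a)` is exactly an element whose reduced word has length at least `2` and
begins and ends with the letter `a`. Let `N_k(y)` be the number of reduced words of length `k`
that begin with `y` and end with `a`. Deleting the first letter gives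
`N_{k+1}(y) + N_k(y⁻¹) = T_k`, where `T_k = ∑_z N_k(z) = (2m-1)^(k-1)`. Solving this recursion
for `y = a` and `y = a⁻¹` simultaneously gives `2m · n_k = (2m-1)^(k-1) + (m-1)(-1)^(k-1) + m`
for `k ≥ 2`, so `f_k` is a combination of `1`, `(-1/(2m-1))^k` and `(1/(2m-1))^k` and
`g_{C(a,a)}` is a sum of three geometric series.
-/

open Finset

theorem List.exists_eq_singleton_append_append_singleton_iff {β : Type*} {L : List β} {y z : β} :
    (∃ w, L = [y] ++ w ++ [z]) ↔ 2 ≤ L.length ∧ L.head? = some y ∧ L.getLast? = some z := by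
  constructor
  · rintro ⟨w, rfl⟩
    simp only [List.singleton_append, List.length_cons, List.length_append]
    exact ⟨by omega, rfl, List.getLast?_concat⟩
  · rintro ⟨hlen, hy, hz⟩
    obtain ⟨_ | ⟨y', w⟩, rfl⟩ := List.getLast?_eq_some_iff.1 hz
    · simp at hlen
    · simp only [List.cons_append, List.head?_cons, Option.some_inj] at hy
      exact ⟨w, by simp [hy]⟩

namespace FreeGroup

section Words

variable {α : Type*}

def invLetter (y : α × Bool) : α × Bool := (y.1, !y.2)

@[simp]
theorem invLetter_invLetter (y : α × Bool) : invLetter (invLetter y) = y := by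
  simp [invLetter]

theorem invLetter_ne (y : α × Bool) : invLetter y ≠ y := by
  simp [invLetter, Prod.ext_iff]

theorem isReduced_cons_iff {y : α × Bool} {L : List (α × Bool)} :
    IsReduced (y :: L) ↔ (∀ w ∈ L.head?, w ≠ invLetter y) ∧ IsReduced L := by
  refine List.isChain_cons.trans (and_congr_left' (forall₂_congr fun w _ => ?_))
  simp only [invLetter, ne_eq, Prod.ext_iff, not_and]
  grind

variable (α) in
def wordsOfLength [Fintype α] (k : ℕ) : Finset (List α) :=
  (univ : Finset (Fin k → α)).map ⟨List.ofFn, List.ofFn_injective⟩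

theorem mem_wordsOfLength [Fintype α] {k : ℕ} {L : List α} :
    L ∈ wordsOfLength α k ↔ L.length = k := by
  refine ⟨fun hL => ?_, fun h => ?_⟩
  · obtain ⟨f, -, rfl⟩ := Finset.mem_map.1 hL
    exact List.length_ofFn
  · subst h
    exact Finset.mem_map.2 ⟨L.get, Finset.mem_univ _, List.ofFn_get L⟩

variable [Fintype α]

open Classical in
def reducedWords (y z : α × Bool) (k : ℕ) : Finset (List (α × Bool)) :=
  (wordsOfLength (α × Bool) k).filter
    fun L => IsReduced L ∧ L.head? = some y ∧ L.getLast? = some z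

theorem mem_reducedWords {y z : α × Bool} {k : ℕ} {L : List (α × Bool)} :
    L ∈ reducedWords y z k ↔
      L.length = k ∧ IsReduced L ∧ L.head? = some y ∧ L.getLast? = some z := by
  simp only [reducedWords, mem_filter, mem_wordsOfLength]

theorem reducedWords_one_self (z : α × Bool) : reducedWords z z 1 = {[z]} := by
  ext L
  rw [mem_reducedWords, Finset.mem_singleton]
  constructor
  · rintro ⟨hL, -, hz, -⟩
    obtain ⟨x, rfl⟩ := List.length_eq_one_iff.1 hL
    simpa using hz
  · rintro rfl
    exact ⟨rfl, IsReduced.singleton, rfl, rfl⟩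

theorem reducedWords_one_of_ne {y z : α × Bool} (h : y ≠ z) : reducedWords y z 1 = ∅ := by
  refine Finset.eq_empty_of_forall_notMem fun L hL => h ?_
  obtain ⟨hL, -, hy, hz⟩ := mem_reducedWords.1 hL
  obtain ⟨x, rfl⟩ := List.length_eq_one_iff.1 hL
  simp_all

theorem sum_card_reducedWords_one (z : α × Bool) : ∑ w, #(reducedWords w z 1) = 1 := by
  rw [Finset.sum_eq_single z (fun w _ hw => by rw [reducedWords_one_of_ne hw, Finset.card_empty])
    (fun h => absurd (Finset.mem_univ z) h), reducedWords_one_self, Finset.card_singleton]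

variable [DecidableEq α]

theorem reducedWords_succ (y z : α × Bool) {k : ℕ} (hk : k ≠ 0) :
    reducedWords y z (k + 1) =
      (univ.erase (invLetter y)).biUnion fun w => (reducedWords w z k).image (List.cons y) := by
  ext L
  simp only [Finset.mem_biUnion, Finset.mem_image, Finset.mem_erase, Finset.mem_univ, and_true,
    mem_reducedWords]
  constructor
  · rintro ⟨hL, hred, hy, hz⟩
    obtain ⟨w, M, rfl⟩ : ∃ w M, L = y :: w :: M := by
      rcases L with _ | ⟨y', _ | ⟨w, M⟩⟩
      · simp at hL
      · simp at hL; omega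
      · simp only [List.head?_cons, Option.some_inj] at hy
        exact ⟨w, M, hy ▸ rfl⟩
    rw [isReduced_cons_iff] at hred
    exact ⟨w, hred.1 w rfl, w :: M, ⟨by simpa using hL, hred.2, rfl, by simpa using hz⟩, rfl⟩
  · rintro ⟨w, hw, M, ⟨hM, hred, hMw, hz⟩, rfl⟩
    have hM0 : M ≠ [] := List.ne_nil_of_length_pos (by omega)
    obtain ⟨w', M', rfl⟩ := List.exists_cons_of_ne_nil hM0
    refine ⟨by simp [hM], isReduced_cons_iff.2 ⟨?_, hred⟩, rfl, by simpa using hz⟩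
    simpa [hMw] using hw

theorem card_reducedWords_succ_add_card_invLetter (y z : α × Bool) {k : ℕ} (hk : k ≠ 0) :
    #(reducedWords y z (k + 1)) + #(reducedWords (invLetter y) z k) =
      ∑ w, #(reducedWords w z k) := by
  rw [reducedWords_succ y z hk, Finset.card_biUnion]
  · simp only [Finset.card_image_of_injective _ List.cons_injective]
    exact Finset.sum_erase_add _ _ (Finset.mem_univ _)
  · intro w₁ _ w₂ _ hne
    refine Finset.disjoint_left.2 fun L h₁ h₂ => hne ?_
    obtain ⟨M₁, hM₁, rfl⟩ := Finset.mem_image.1 h₁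
    obtain ⟨M₂, hM₂, hM⟩ := Finset.mem_image.1 h₂
    rw [List.cons_injective hM] at hM₂
    exact Option.some_inj.1
      ((mem_reducedWords.1 hM₁).2.2.1.symm.trans (mem_reducedWords.1 hM₂).2.2.1)

theorem sum_card_reducedWords_succ_add (z : α × Bool) {k : ℕ} (hk : k ≠ 0) :
    ∑ w, #(reducedWords w z (k + 1)) + ∑ w, #(reducedWords w z k) =
      2 * Fintype.card α * ∑ w, #(reducedWords w z k) := by
  have hinv : ∑ w, #(reducedWords (invLetter w) z k) = ∑ w, #(reducedWords w z k) :=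
    Equiv.sum_comp (Function.Involutive.toPerm _ invLetter_invLetter)
      fun w => #(reducedWords w z k)
  conv_lhs => rw [← hinv, ← Finset.sum_add_distrib]
  simp only [card_reducedWords_succ_add_card_invLetter _ z hk, Finset.sum_const, Finset.card_univ,
    Fintype.card_prod, Fintype.card_bool, smul_eq_mul, mul_comm (Fintype.card α)]

theorem sum_card_reducedWords (z : α × Bool) (k : ℕ) :
    (∑ w, #(reducedWords w z (k + 1)) : ℝ) = (2 * Fintype.card α - 1) ^ k := by
  induction k with
  | zero => simpa using congrArg (Nat.cast (R := ℝ)) (sum_card_reducedWords_one z)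
  | succ k ih =>
    have h := congrArg (Nat.cast (R := ℝ)) (sum_card_reducedWords_succ_add z k.succ_ne_zero)
    push_cast at h
    linear_combination h + (2 * (Fintype.card α : ℝ) - 1) * ih

-- Proved jointly: the recursion for either count involves the other one.
theorem card_reducedWords_self_and_invLetter (z : α × Bool) (k : ℕ) :
    2 * Fintype.card α * (#(reducedWords z z (k + 1)) : ℝ) =
        (2 * Fintype.card α - 1) ^ k + (Fintype.card α - 1) * (-1) ^ k + Fintype.card α ∧
      2 * Fintype.card α * (#(reducedWords (invLetter z) z (k + 1)) : ℝ) =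
        (2 * Fintype.card α - 1) ^ k + (Fintype.card α - 1) * (-1) ^ k - Fintype.card α := by
  induction k with
  | zero =>
    rw [reducedWords_one_self, reducedWords_one_of_ne (invLetter_ne z)]
    constructor
    · norm_num; ring
    · norm_num
  | succ k ih =>
    have hS := sum_card_reducedWords z k
    have hA := congrArg (Nat.cast (R := ℝ))
      (card_reducedWords_succ_add_card_invLetter z z k.succ_ne_zero)
    have hB := congrArg (Nat.cast (R := ℝ))
      (card_reducedWords_succ_add_card_invLetter (invLetter z) z k.succ_ne_zero)
    rw [invLetter_invLetter] at hB
    push_cast at hA hB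
    constructor
    · linear_combination (2 * (Fintype.card α : ℝ)) * (hA + hS) - ih.2
    · linear_combination (2 * (Fintype.card α : ℝ)) * (hB + hS) - ih.1

end Words

variable {α : Type*} [DecidableEq α]

theorem toWord_mul_of_norm_mul_eq {x y : FreeGroup α} (h : norm (x * y) = norm x + norm y) :
    (x * y).toWord = x.toWord ++ y.toWord :=
  (toWord_mul_sublist x y).eq_of_length (h.trans List.length_append.symm)

theorem ncard_setOf_toWord_mem {S : Finset (List (α × Bool))} (hS : ∀ L ∈ S, IsReduced L) :
    {g : FreeGroup α | g.toWord ∈ S}.ncard = #S := by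
  rw [← Set.ncard_coe_finset S, ← Set.ncard_image_of_injective _ toWord_injective]
  congr 1
  ext L
  simp only [Set.mem_image, Set.mem_ofPred_eq, Finset.mem_coe]
  refine ⟨by rintro ⟨g, hg, rfl⟩; exact hg, fun hL => ⟨mk L, ?_, ?_⟩⟩ <;>
    simp only [toWord_mk, (hS L hL).reduce_eq, hL]

end FreeGroup

open FreeGroup

theorem hasSum_geometric_add_two (c : ℝ) {r : ℝ} (hr : |r| < 1) :
    HasSum (fun j : ℕ => c * r ^ (j + 2)) (c * (r ^ 2 / (1 - r))) := by
  rw [← mul_div_assoc, div_eq_mul_inv]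
  exact ((hasSum_geometric_of_abs_lt_one hr).mul_left (c * r ^ 2)).congr_fun fun j => by ring

section DoubleCone

variable {m : ℕ}

theorem glen_eq_norm (g : FG m) : glen g = g.norm := rfl

theorem mem_dcone_iff {u v g : FG m} :
    g ∈ dcone u v ↔ ∃ w, g.toWord = u.toWord ++ w ++ v.toWord := by
  constructor
  · rintro ⟨f, rfl, hlen⟩
    simp only [glen_eq_norm] at hlen
    have huf : norm (u * f) = norm u + norm f := by
      linarith [norm_mul_le u f, norm_mul_le (u * f) v]
    refine ⟨f.toWord, ?_⟩
    rw [toWord_mul_of_norm_mul_eq (by omega), toWord_mul_of_norm_mul_eq huf]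
  · rintro ⟨w, hw⟩
    have hred : IsReduced w := (hw ▸ isReduced_toWord).infix ⟨u.toWord, v.toWord, rfl⟩
    refine ⟨mk w, ?_, ?_⟩
    · rw [← mk_toWord (x := g), hw, ← mul_mk, ← mul_mk, mk_toWord, mk_toWord]
    · simp only [glen, toWord_mk, hred.reduce_eq, hw, List.length_append]

theorem nk_dcone_eq_zero_of_lt {u v : FG m} {k : ℕ} (hk : k < glen u + glen v) :
    nk (dcone u v) k = 0 := by
  have hempty : {g ∈ dcone u v | glen g = k} = ∅ := by
    refine Set.eq_empty_of_forall_notMem ?_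
    rintro g ⟨⟨f, -, hg⟩, rfl⟩
    omega
  rw [nk, hempty, Set.ncard_empty]

theorem nk_dcone_of_toWord_eq_singleton {a : FG m} {x : Fin m × Bool} (ha : a.toWord = [x])
    {k : ℕ} (hk : 2 ≤ k) : nk (dcone a a) k = #(reducedWords x x k) := by
  rw [nk, ← ncard_setOf_toWord_mem fun L hL => (mem_reducedWords.1 hL).2.1]
  congr 1
  ext g
  simp only [Set.mem_ofPred_eq, mem_dcone_iff, ha,
    List.exists_eq_singleton_append_append_singleton_iff, mem_reducedWords, glen]
  have := isReduced_toWord (x := g)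
  grind

section Letter

variable {a : FG m} {x : Fin m × Bool}

theorem fk_dcone_of_toWord_eq_singleton (ha : a.toWord = [x]) (j : ℕ) :
    fk (dcone a a) (j + 2) = ((2 * m - 1) ^ (j + 1) + (m - 1) * (-1) ^ (j + 1) + m) /
      (4 * m ^ 2 * (2 * m - 1) ^ (j + 1)) := by
  have hm : (1 : ℝ) ≤ m := Nat.one_le_cast.2 x.1.pos
  have hq : (2 * m - 1 : ℝ) ≠ 0 := by linarith
  have hcount : 2 * m * (#(reducedWords x x (j + 2)) : ℝ) =
      (2 * m - 1) ^ (j + 1) + (m - 1) * (-1) ^ (j + 1) + m := by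
    simpa using (card_reducedWords_self_and_invLetter x (j + 1)).1
  rw [fk, nk_dcone_of_toWord_eq_singleton ha (by omega), sphereCard, if_neg (by omega),
    show j + 2 - 1 = j + 1 by omega, div_eq_div_iff (by positivity) (by positivity)]
  linear_combination (2 * m * (2 * m - 1 : ℝ) ^ (j + 1)) * hcount

theorem hasSum_fk_dcone_add_two_of_toWord_eq_singleton (ha : a.toWord = [x]) {t : ℝ}
    (ht : |t| < 1) :
    HasSum (fun j => fk (dcone a a) (j + 2) * t ^ (j + 2))
      (t ^ 2 / (4 * (m : ℝ) ^ 2 * (1 - t))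
        + t ^ 2 / (4 * (m : ℝ) ^ 2 * (2 * (m : ℝ) - 1 + t))
        + t ^ 3 / (2 * (m : ℝ) * ((2 * (m : ℝ) - 1) ^ 2 - t ^ 2))) := by
  have hm : (1 : ℝ) ≤ m := Nat.one_le_cast.2 x.1.pos
  set q : ℝ := 2 * m - 1 with hq
  obtain ⟨ht₁, ht₂⟩ := abs_lt.1 ht
  have hq0 : 0 < q := by linarith
  have htq : |t / q| < 1 := by
    rw [abs_div, abs_of_pos hq0, div_lt_one hq0]; linarith
  have htq' : |-t / q| < 1 := by rwa [neg_div, abs_neg]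
  have hterm : ∀ j : ℕ, fk (dcone a a) (j + 2) * t ^ (j + 2) =
      1 / (4 * m ^ 2) * t ^ (j + 2) + ((1 - m) * q / (4 * m ^ 2) * (-t / q) ^ (j + 2) +
        q / (4 * m) * (t / q) ^ (j + 2)) := fun j => by
    rw [fk_dcone_of_toWord_eq_singleton ha, ← hq, div_pow, div_pow, neg_pow]
    field_simp
    ring
  convert ((hasSum_geometric_add_two _ ht).add ((hasSum_geometric_add_two _ htq').add
    (hasSum_geometric_add_two _ htq))).congr_fun hterm using 1
  have hqt : q + t ≠ 0 := by linarith
  have hqt' : q - t ≠ 0 := by linarith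
  have h1t : 1 - t ≠ 0 := by linarith
  have hqt2 : q ^ 2 - t ^ 2 ≠ 0 := by rw [sq_sub_sq]; exact mul_ne_zero hqt hqt'
  rw [one_sub_div hq0.ne', one_sub_div hq0.ne', sub_neg_eq_add]
  field_simp
  rw [hq]
  ring

theorem hasSum_fk_dcone_of_toWord_eq_singleton (ha : a.toWord = [x]) {t : ℝ} (ht : |t| < 1) :
    HasSum (fun k => fk (dcone a a) k * t ^ k)
      (t ^ 2 / (4 * (m : ℝ) ^ 2 * (1 - t))
        + t ^ 2 / (4 * (m : ℝ) ^ 2 * (2 * (m : ℝ) - 1 + t))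
        + t ^ 3 / (2 * (m : ℝ) * ((2 * (m : ℝ) - 1) ^ 2 - t ^ 2))) := by
  have hlen : glen a = 1 := by rw [glen, ha, List.length_singleton]
  have hfk : ∀ k < 2, fk (dcone a a) k = 0 := fun k hk => by
    rw [fk, nk_dcone_eq_zero_of_lt (by omega), Nat.cast_zero, zero_div]
  rw [← hasSum_nat_add_iff' 2, Finset.sum_range_succ, Finset.sum_range_one, hfk 0 (by omega),
    hfk 1 (by omega), zero_mul, zero_mul, add_zero, sub_zero]
  exact hasSum_fk_dcone_add_two_of_toWord_eq_singleton ha ht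

end Letter

end DoubleCone

theorem stmt15_general {m : ℕ} (a : FG m) (ha : glen a = 1) :
    ∀ t ∈ Set.Ioo (-1 : ℝ) 1,
      genFun (dcone a a) t
        = t ^ 2 / (4 * (m : ℝ) ^ 2 * (1 - t))
          + t ^ 2 / (4 * (m : ℝ) ^ 2 * (2 * (m : ℝ) - 1 + t))
          + t ^ 3 / (2 * (m : ℝ) * ((2 * (m : ℝ) - 1) ^ 2 - t ^ 2)) := by
  obtain ⟨x, hx⟩ := List.length_eq_one_iff.1 ha
  intro t ht
  exact (hasSum_fk_dcone_of_toWord_eq_singleton hx (abs_lt.2 ht)).tsum_eq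

/-- the generating function of `C(a,a)` for a letter `a`. -/
theorem stmt15 {m : ℕ} (hm : 2 ≤ m) (a : FG m) (ha : glen a = 1) :
    ∀ t ∈ Set.Ioo (-1 : ℝ) 1,
      genFun (dcone a a) t
        = t ^ 2 / (4 * (m : ℝ) ^ 2 * (1 - t))
          + t ^ 2 / (4 * (m : ℝ) ^ 2 * (2 * (m : ℝ) - 1 + t))
          + t ^ 3 / (2 * (m : ℝ) * ((2 * (m : ℝ) - 1) ^ 2 - t ^ 2)) :=
  stmt15_general a ha
end
end

section
/- Let F be the free group of rank m ≥ 2. Then for all a, b ∈ Σ (including the cases b = a and b = a^{-1}): lim_{t→1⁻} (1−t)·g_{C(a,b)}(t) = 1/(4m²). In particular every double-based cone with one-letter handles has Cesaro density 1/(4m²). -/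
open Filter Set

noncomputable section

/-!
An element of `C(a, b)` of length `n + 2` is the same as a reduced word of that length that
begins with the letter `a` and ends with the letter `b`. Let `N n x` count the reduced words of
length `n + 1` from `x` to `b`. Summing over the admissible second letters gives
`N (n + 1) x + N n x⁻¹ = (2m - 1)^n`, so the error `2m · N n x - (2m - 1)^n` only changes sign
(and the letter) from one step to the next, and stays bounded by `2m - 1`. Therefore
`f_k(C(a, b)) → 1 / (4m²)`, and an Abelian theorem (from Abel's limit theorem, applied to the
differences `f_{k+1} - f_k`) turns this into the claimed limit of `(1 - t) g(t)`.
-/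

open Topology

theorem List.exists_eq_cons_append_singleton_iff {α : Type*} {l : List α} {a b : α} :
    (∃ w, l = a :: w ++ [b]) ↔ 2 ≤ l.length ∧ l.head? = some a ∧ l.getLast? = some b := by
  constructor
  · rintro ⟨w, rfl⟩
    exact ⟨by simp, rfl, List.getLast?_concat⟩
  · rintro ⟨hl, hh, hb⟩
    rcases l with _ | ⟨c, l⟩
    · simp at hl
    obtain ⟨w, d, rfl⟩ : ∃ w d, l = w ++ [d] := by
      rcases List.eq_nil_or_concat' l with rfl | h
      · simp at hl
      · exact h
    rw [← List.cons_append, List.getLast?_concat] at hb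
    simp_all

namespace FreeGroup

variable {α : Type*}

theorem ne_inv_letter_iff {x y : α × Bool} : y ≠ (x.1, !x.2) ↔ (x.1 = y.1 → x.2 = y.2) := by
  obtain ⟨a, b⟩ := x; obtain ⟨c, d⟩ := y
  cases b <;> cases d <;> simp [eq_comm]

theorem toWord_mul_eq_append [DecidableEq α] {u v : FreeGroup α}
    (h : (u * v).norm = u.norm + v.norm) : (u * v).toWord = u.toWord ++ v.toWord :=
  (toWord_mul_sublist u v).eq_of_length (by simpa [norm] using h)

variable [Fintype α] [DecidableEq α]

-- `n` counts the steps between the two end letters: the words have length `n + 1`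
def reducedWordsBetween : ℕ → α × Bool → α × Bool → Finset (List (α × Bool))
  | 0, x, z => if x = z then {[x]} else ∅
  | n + 1, x, z => (Finset.univ.erase (x.1, !x.2)).biUnion fun y =>
      (reducedWordsBetween n y z).map ⟨List.cons x, List.cons_injective⟩

theorem mem_reducedWordsBetween {n : ℕ} {x z : α × Bool} {w : List (α × Bool)} :
    w ∈ reducedWordsBetween n x z ↔
      w.length = n + 1 ∧ IsReduced w ∧ w.head? = some x ∧ w.getLast? = some z := by
  induction n generalizing x w with
  | zero =>
    simp only [reducedWordsBetween]
    split_ifs with h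
    · subst h
      rcases w with _ | ⟨y, _ | ⟨y', w⟩⟩ <;> simp [eq_comm]
    · rcases w with _ | ⟨y, _ | ⟨y', w⟩⟩ <;> simp +contextual [h]
  | succ n ih =>
    rcases w with _ | ⟨y, _ | ⟨y', w⟩⟩
    · simp [reducedWordsBetween]
    · simp [reducedWordsBetween, ih]
    · simp only [reducedWordsBetween, Finset.mem_biUnion, Finset.mem_erase, Finset.mem_univ,
        and_true, Finset.mem_map, Function.Embedding.coeFn_mk, List.cons.injEq, ih,
        ne_inv_letter_iff, isReduced_cons_cons, List.getLast?_cons_cons, List.head?_cons,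
        Option.some.injEq, List.length_cons]
      constructor
      · rintro ⟨_, hy, _, ⟨hl, hr, hh, hz⟩, rfl, rfl⟩
        obtain rfl : y' = _ := by simpa using hh
        exact ⟨by simpa using hl, ⟨hy, hr⟩, rfl, hz⟩
      · rintro ⟨hl, ⟨hy, hr⟩, rfl, hz⟩
        exact ⟨y', hy, _, ⟨by simpa using hl, hr, rfl, hz⟩, rfl, rfl⟩

theorem card_reducedWordsBetween_succ (n : ℕ) (x z : α × Bool) :
    (reducedWordsBetween (n + 1) x z).card =
      ∑ y ∈ Finset.univ.erase (x.1, !x.2), (reducedWordsBetween n y z).card := by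
  rw [reducedWordsBetween, Finset.card_biUnion]
  · simp only [Finset.card_map]
  · intro y₁ _ y₂ _ hne
    simp only [Finset.disjoint_left, Finset.mem_map, Function.Embedding.coeFn_mk, not_exists,
      not_and]
    rintro _ ⟨w₁, hw₁, rfl⟩ w₂ hw₂ hw
    obtain rfl : w₂ = w₁ := List.cons_injective hw
    rw [mem_reducedWordsBetween] at hw₁ hw₂
    exact hne (Option.some_injective _ (hw₁.2.2.1.symm.trans hw₂.2.2.1))

theorem sum_card_reducedWordsBetween (n : ℕ) (z : α × Bool) :
    ∑ x, (reducedWordsBetween n x z).card = (2 * Fintype.card α - 1) ^ n := by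
  induction n with
  | zero => simp [reducedWordsBetween, apply_ite Finset.card]
  | succ n ih =>
    calc ∑ x, (reducedWordsBetween (n + 1) x z).card
        = ∑ y, ∑ x ∈ Finset.univ.erase (y.1, !y.2), (reducedWordsBetween n y z).card := by
          simp only [card_reducedWordsBetween_succ]
          refine Finset.sum_comm' fun x y => ?_
          simp only [Finset.mem_univ, Finset.mem_erase, ne_inv_letter_iff]
          grind
      _ = ∑ y, (2 * Fintype.card α - 1) * (reducedWordsBetween n y z).card := by
          simp [Finset.card_erase_of_mem, mul_comm]
      _ = (2 * Fintype.card α - 1) ^ (n + 1) := by rw [← Finset.mul_sum, ih, pow_succ']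

theorem card_reducedWordsBetween_succ_add (n : ℕ) (x z : α × Bool) :
    (reducedWordsBetween (n + 1) x z).card + (reducedWordsBetween n (x.1, !x.2) z).card =
      (2 * Fintype.card α - 1) ^ n := by
  rw [card_reducedWordsBetween_succ, Finset.sum_erase_add _ _ (Finset.mem_univ _),
    sum_card_reducedWordsBetween]

theorem abs_mul_card_reducedWordsBetween_sub_le (n : ℕ) (x z : α × Bool) :
    |2 * (Fintype.card α : ℝ) * (reducedWordsBetween n x z).card - (2 * Fintype.card α - 1) ^ n|
      ≤ 2 * Fintype.card α - 1 := by
  have hα : 1 ≤ Fintype.card α := Fintype.card_pos_iff.mpr ⟨z.1⟩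
  have hαR : (1 : ℝ) ≤ Fintype.card α := by exact_mod_cast hα
  induction n generalizing x with
  | zero =>
    rw [abs_le]
    by_cases h : x = z <;> simp [reducedWordsBetween, h] <;> linarith
  | succ n ih =>
    have hrec : ((reducedWordsBetween (n + 1) x z).card : ℝ) =
        (2 * Fintype.card α - 1) ^ n - (reducedWordsBetween n (x.1, !x.2) z).card := by
      rw [eq_sub_iff_add_eq]
      have h := congrArg (Nat.cast (R := ℝ)) (card_reducedWordsBetween_succ_add n x z)
      push_cast [Nat.cast_sub (by omega : 1 ≤ 2 * Fintype.card α)] at h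
      exact h
    calc _ = |2 * (Fintype.card α : ℝ) * (reducedWordsBetween n (x.1, !x.2) z).card
            - (2 * Fintype.card α - 1) ^ n| := by
          rw [hrec, ← abs_neg]; ring_nf
      _ ≤ _ := ih _

theorem tendsto_card_reducedWordsBetween_div (hα : 2 ≤ Fintype.card α) (x z : α × Bool) :
    Tendsto (fun n => ((reducedWordsBetween n x z).card : ℝ) /
        (2 * Fintype.card α * (2 * Fintype.card α - 1) ^ n)) atTop
      (𝓝 (1 / (4 * (Fintype.card α : ℝ) ^ 2))) := by
  set m : ℝ := (Fintype.card α : ℝ) with hm_def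
  set q : ℝ := 2 * m - 1
  have hq : 1 < q := by
    have : (2 : ℝ) ≤ m := by rw [hm_def]; exact_mod_cast hα
    linarith
  rw [← tendsto_sub_nhds_zero_iff]
  refine squeeze_zero_norm (a := fun n => q / (4 * m ^ 2) * (1 / q) ^ n) (fun n => ?_) ?_
  · have hm : 0 < m := by linarith
    have hpos : 0 < 4 * m ^ 2 * q ^ n := by positivity
    calc ‖((reducedWordsBetween n x z).card : ℝ) / (2 * m * q ^ n) - 1 / (4 * m ^ 2)‖
        = |2 * m * (reducedWordsBetween n x z).card - q ^ n| / (4 * m ^ 2 * q ^ n) := by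
          rw [Real.norm_eq_abs, ← abs_of_pos hpos, ← abs_div]
          congr 1
          field_simp
          ring
      _ ≤ q / (4 * m ^ 2 * q ^ n) := by
          gcongr
          exact abs_mul_card_reducedWordsBetween_sub_le n x z
      _ = q / (4 * m ^ 2) * (1 / q) ^ n := by
          rw [one_div_pow]
          field_simp
  · simpa using (tendsto_pow_atTop_nhds_zero_of_lt_one (by positivity)
      ((div_lt_one (by linarith)).2 hq)).const_mul (q / (4 * m ^ 2))

end FreeGroup

open FreeGroup

theorem mem_dcone_iff_s17 {m : ℕ} {a b g : FG m} {A B : Fin m × Bool}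
    (ha : a.toWord = [A]) (hb : b.toWord = [B]) :
    g ∈ dcone a b ↔ ∃ w, g.toWord = A :: w ++ [B] := by
  constructor
  · rintro ⟨f, rfl, hlen⟩
    change (a * f * b).norm = a.norm + f.norm + b.norm at hlen
    have h₁ := norm_mul_le a f
    have h₂ := norm_mul_le (a * f) b
    refine ⟨f.toWord, ?_⟩
    rw [toWord_mul_eq_append (u := a * f) (by omega), toWord_mul_eq_append (by omega), ha, hb]
    rfl
  · rintro ⟨w, hw⟩
    have hred : IsReduced w := isReduced_toWord.infix ⟨[A], [B], by rw [hw]; simp⟩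
    refine ⟨mk w, ?_, ?_⟩
    · rw [← mk_toWord (x := g), hw, ← mk_toWord (x := a), ← mk_toWord (x := b), ha, hb,
        mul_mk, mul_mk]
      rfl
    · simp [glen, hw, ha, hb, hred.reduce_eq, add_comm]

theorem dcone_inter_sphere {m : ℕ} {a b : FG m} {A B : Fin m × Bool}
    (ha : a.toWord = [A]) (hb : b.toWord = [B]) (n : ℕ) :
    {g ∈ dcone a b | glen g = n + 2} = toWord ⁻¹' ↑(reducedWordsBetween (n + 1) A B) := by
  ext g
  simp only [mem_ofPred_eq, mem_preimage, Finset.mem_coe, mem_reducedWordsBetween,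
    mem_dcone_iff_s17 ha hb, List.exists_eq_cons_append_singleton_iff, glen]
  constructor
  · rintro ⟨⟨-, hhead, hlast⟩, hlen⟩
    exact ⟨hlen, isReduced_toWord, hhead, hlast⟩
  · rintro ⟨hlen, -, hhead, hlast⟩
    exact ⟨⟨by omega, hhead, hlast⟩, hlen⟩

theorem nk_dcone_add_two {m : ℕ} {a b : FG m} {A B : Fin m × Bool}
    (ha : a.toWord = [A]) (hb : b.toWord = [B]) (n : ℕ) :
    nk (dcone a b) (n + 2) = (reducedWordsBetween (n + 1) A B).card := by
  rw [nk, dcone_inter_sphere ha hb, Set.ncard_preimage_of_injective_subset_range toWord_injective,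
    Set.ncard_coe_finset]
  intro w hw
  exact ⟨mk w, by rw [toWord_mk, (mem_reducedWordsBetween.1 hw).2.1.reduce_eq]⟩

theorem one_sub_mul_tsum_eq {f : ℕ → ℝ} {t : ℝ} (hf : Summable fun k => f k * t ^ k) :
    (1 - t) * ∑' k, f k * t ^ k = t * ∑' k, (f (k + 1) - f k) * t ^ k + f 0 := by
  set S := ∑' k, f k * t ^ k
  have hshift : HasSum (fun k => f (k + 1) * t ^ (k + 1)) (S - f 0) := by
    simpa using (hasSum_nat_add_iff' 1).2 hf.hasSum
  have hdiff := hshift.sub (hf.hasSum.mul_left t)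
  rw [show (fun k => f (k + 1) * t ^ (k + 1) - t * (f k * t ^ k)) =
      fun k => t * ((f (k + 1) - f k) * t ^ k) from funext fun k => by ring] at hdiff
  rw [show t * ∑' k, (f (k + 1) - f k) * t ^ k = S - f 0 - t * S by
    rw [← tsum_mul_left]; exact hdiff.tsum_eq]
  ring

theorem tendsto_one_sub_mul_tsum_powerSeries {f : ℕ → ℝ} {L : ℝ}
    (hf : Tendsto f atTop (𝓝 L)) :
    Tendsto (fun t => (1 - t) * ∑' k, f k * t ^ k) (𝓝[<] 1) (𝓝 L) := by
  have habel : Tendsto (fun t => ∑' k, (f (k + 1) - f k) * t ^ k) (𝓝[<] 1) (𝓝 (L - f 0)) :=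
    Real.tendsto_tsum_powerSeries_nhdsWithin_lt (by
      simp_rw [Finset.sum_range_sub]
      exact hf.sub_const (f 0))
  have hlim := ((tendsto_nhdsWithin_of_tendsto_nhds tendsto_id).mul habel).add_const (f 0)
  rw [one_mul, sub_add_cancel] at hlim
  refine hlim.congr' ?_
  filter_upwards [Ioo_mem_nhdsLT zero_lt_one] with t ht
  refine (one_sub_mul_tsum_eq (summable_of_isBigO_nat
    (summable_geometric_of_lt_one ht.1.le ht.2) ?_)).symm
  simpa using (hf.isBigO_one ℝ).mul (Asymptotics.isBigO_refl (fun k => t ^ k) atTop)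

/-- every double-based cone with one-letter handles has Cesaro density
`1/(4m²)`. -/
theorem stmt17 {m : ℕ} (hm : 2 ≤ m) (a b : FG m)
    (ha : glen a = 1) (hb : glen b = 1) :
    Tendsto (fun t => (1 - t) * genFun (dcone a b) t)
      (nhdsWithin 1 (Set.Iio 1)) (nhds (1 / (4 * (m : ℝ) ^ 2))) := by
  obtain ⟨A, hA⟩ := List.length_eq_one_iff.mp ha
  obtain ⟨B, hB⟩ := List.length_eq_one_iff.mp hb
  refine tendsto_one_sub_mul_tsum_powerSeries ?_
  rw [← tendsto_add_atTop_iff_nat 2]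
  have hcount := (tendsto_card_reducedWordsBetween_div (by simpa using hm) A B).comp
    (tendsto_add_atTop_nat 1)
  rw [Fintype.card_fin] at hcount
  convert hcount using 2 with n
  simp [fk, nk_dcone_add_two hA hB, sphereCard]
end
end
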